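/- For a real random variable X with finite support contained in [m, M] (or bounded with min and max attained), (EX)³ + 3m·Var(X) ≤ E(X³) ≤ (EX)³ + 3M·Var(X). -/

import Mathlib

/-! Expanding around the mean `a = E X` gives
`x³ = a³ + 3a²(x - a) + 3c(x - a)² + (x - a)²(x + 2a - 3c)`,
and the last term is nonnegative when `c ≤ x` and `c ≤ a`. Taking expectations, the linear
term vanishes and `E (X - a)² = Var X`, which is the lower bound with `c = m`; the upper bound
is the lower bound for `-X`. -/

open MeasureTheory

lemma cube_taylor_lower_bound {a c x : ℝ} (hca : c ≤ a) (hcx : c ≤ x) :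
    a ^ 3 + 3 * a ^ 2 * (x - a) + 3 * c * (x - a) ^ 2 ≤ x ^ 3 := by
  have hrem : 0 ≤ (x - a) ^ 2 * (x + 2 * a - 3 * c) :=
    mul_nonneg (sq_nonneg _) (by linarith)
  linear_combination hrem

section

variable {Ω : Type*} [MeasurableSpace Ω] {μ : Measure Ω} {X : Ω → ℝ}

lemma integrable_pow_of_ae_mem_Icc [IsFiniteMeasure μ] {m M : ℝ}
    (hX : Measurable X) (hb : ∀ᵐ ω ∂μ, X ω ∈ Set.Icc m M) (n : ℕ) :
    Integrable (fun ω => X ω ^ n) μ := by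
  refine Integrable.of_bound (hX.pow_const n).aestronglyMeasurable (max |m| |M| ^ n) ?_
  filter_upwards [hb] with ω hω
  rw [norm_pow, Real.norm_eq_abs]
  exact pow_le_pow_left₀ (abs_nonneg _) (abs_le_max_abs_abs hω.1 hω.2) n

lemma integral_pow_three_ge [IsProbabilityMeasure μ] {c : ℝ} (hX1 : Integrable X μ)
    (hX2 : Integrable (fun ω => X ω ^ 2) μ) (hX3 : Integrable (fun ω => X ω ^ 3) μ)
    (hc : ∀ᵐ ω ∂μ, c ≤ X ω) :
    (∫ ω, X ω ∂μ) ^ 3 + 3 * c * ((∫ ω, X ω ^ 2 ∂μ) - (∫ ω, X ω ∂μ) ^ 2) ≤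
      ∫ ω, X ω ^ 3 ∂μ := by
  set a := ∫ ω, X ω ∂μ
  have hca : c ≤ a := by simpa using integral_mono_ae (integrable_const c) hX1 hc
  have hlin :
      Integrable (fun ω => (3 * a ^ 2 - 6 * c * a) * X ω + (3 * c * a ^ 2 - 2 * a ^ 3)) μ :=
    (hX1.const_mul _).add (integrable_const _)
  have hpoint : ∀ᵐ ω ∂μ,
      3 * c * X ω ^ 2 + ((3 * a ^ 2 - 6 * c * a) * X ω + (3 * c * a ^ 2 - 2 * a ^ 3)) ≤
        X ω ^ 3 := by
    filter_upwards [hc] with ω hω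
    linear_combination cube_taylor_lower_bound hca hω
  have hquad : Integrable (fun ω => 3 * c * X ω ^ 2 +
      ((3 * a ^ 2 - 6 * c * a) * X ω + (3 * c * a ^ 2 - 2 * a ^ 3))) μ :=
    (hX2.const_mul _).add hlin
  have hint := integral_mono_ae hquad hX3 hpoint
  rw [integral_add (hX2.const_mul _) hlin, integral_add (hX1.const_mul _) (integrable_const _),
    integral_const_mul, integral_const_mul, integral_const] at hint
  simp only [probReal_univ, smul_eq_mul, one_mul] at hint
  linarith

end

open MeasureTheory in
theorem stmt5 {Ω : Type*} [MeasurableSpace Ω] (μ : Measure Ω)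
    [IsProbabilityMeasure μ] (X : Ω → ℝ) (m M : ℝ) (hX : Measurable X)
    (hb : ∀ᵐ ω ∂μ, X ω ∈ Set.Icc m M) :
    (∫ ω, X ω ∂μ) ^ 3 + 3 * m * ((∫ ω, (X ω) ^ 2 ∂μ) - (∫ ω, X ω ∂μ) ^ 2) ≤
        ∫ ω, (X ω) ^ 3 ∂μ ∧
    (∫ ω, (X ω) ^ 3 ∂μ) ≤
      (∫ ω, X ω ∂μ) ^ 3 + 3 * M * ((∫ ω, (X ω) ^ 2 ∂μ) - (∫ ω, X ω ∂μ) ^ 2) := by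
  have hX1 : Integrable X μ := by simpa using integrable_pow_of_ae_mem_Icc hX hb 1
  have hX2 := integrable_pow_of_ae_mem_Icc hX hb 2
  have hX3 := integrable_pow_of_ae_mem_Icc hX hb 3
  refine ⟨integral_pow_three_ge hX1 hX2 hX3 (hb.mono fun _ h => h.1), ?_⟩
  have odd3 : Odd 3 := by decide
  have hneg := integral_pow_three_ge (X := -X) (c := -M) hX1.neg
    (by simpa [even_two.neg_pow] using hX2) (by simpa [odd3.neg_pow] using hX3.neg)
    (hb.mono fun _ h => neg_le_neg h.2)
  simp only [Pi.neg_apply, even_two.neg_pow, odd3.neg_pow, integral_neg] at hneg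
  linarith
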